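/- Let d ≥ 1 be an integer, δ > 0, and let g : [0,∞) → [0,∞) be a nonincreasing function. Let x₁,…,x_N be a δ-separated family of points in ℝ^d and let Φ be the symmetric N×N matrix with entries Φ_{ij} = g(‖x_i − x_j‖). Then every eigenvalue of Φ is at least g(0) − 10^d ∑_{m=1}^∞ m^{d−1} g(mδ). In particular, if 10^d ∑_{m=1}^∞ m^{d−1} g(mδ) < g(0), then Φ is positive definite with smallest eigenvalue bounded below by a positive constant depending only on g, δ and d, independently of N. -/

import Mathlib

/-!
By Gershgorin's theorem every eigenvalue of `Φ` lies within `∑_{j ≠ k} g ‖x k - x j‖` of a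
diagonal entry `g 0`. To bound this row sum, sort the points `x j` into the shells
`m δ ≤ ‖x k - x j‖ ≤ (m + 1) δ`, `m ≥ 1`, on which `g ≤ g (m δ)`. The balls of radius `δ / 2`
around the points of one shell are disjoint and lie in the annulus between the radii
`m δ - δ / 2` and `(m + 1) δ + δ / 2`, so comparing volumes, a shell holds at most
`(2m + 3)^d - (2m - 1)^d ≤ 10^d m^(d-1)` points.
-/

open Finset Metric MeasureTheory Module

theorem four_mul_mul_five_pow_le_ten_pow (n : ℕ) : 4 * n * 5 ^ (n - 1) ≤ 10 ^ n := by
  rcases n with _ | k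
  · simp
  · have hk : k + 1 ≤ 2 ^ k := Nat.lt_two_pow_self
    rw [Nat.add_sub_cancel, pow_succ, show 10 = 2 * 5 by rfl, mul_pow]
    nlinarith [pow_pos (by norm_num : 0 < 5) k]

theorem two_mul_add_three_pow_sub_le {t : ℝ} (ht : 1 ≤ t) (n : ℕ) :
    (2 * t + 3) ^ n - (2 * t - 1) ^ n ≤ 10 ^ n * t ^ (n - 1) := by
  have hmax : max |2 * t + 3| |2 * t - 1| = 2 * t + 3 := by
    rw [abs_of_nonneg (by linarith), abs_of_nonneg (by linarith)]
    exact max_eq_left (by linarith)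
  have hcoeff : (4 * n * 5 ^ (n - 1) : ℝ) ≤ 10 ^ n := by
    exact_mod_cast four_mul_mul_five_pow_le_ten_pow n
  calc (2 * t + 3) ^ n - (2 * t - 1) ^ n
      ≤ |2 * t + 3 - (2 * t - 1)| * n * (2 * t + 3) ^ (n - 1) := by
        simpa only [hmax] using
          (le_abs_self _).trans (abs_pow_sub_pow_le (2 * t + 3) (2 * t - 1) n)
    _ ≤ 4 * n * (5 * t) ^ (n - 1) := by
        rw [show 2 * t + 3 - (2 * t - 1) = 4 by ring, abs_of_pos (by norm_num)]
        gcongr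
        linarith
    _ = 4 * n * 5 ^ (n - 1) * t ^ (n - 1) := by ring
    _ ≤ 10 ^ n * t ^ (n - 1) := by gcongr

theorem floor_div_sub_one_mem_shell {x δ : ℝ} (hδ : 0 < δ) (hx : δ ≤ x) :
    (((⌊x / δ⌋₊ - 1 : ℕ) : ℝ) + 1) * δ ≤ x ∧ x ≤ (((⌊x / δ⌋₊ - 1 : ℕ) : ℝ) + 1 + 1) * δ := by
  have h1 : 1 ≤ ⌊x / δ⌋₊ := Nat.le_floor (by rwa [Nat.cast_one, le_div_iff₀ hδ, one_mul])
  rw [Nat.cast_sub h1, Nat.cast_one, sub_add_cancel, ← le_div_iff₀ hδ, ← div_le_iff₀ hδ]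
  exact ⟨Nat.floor_le (div_nonneg (hδ.le.trans hx) hδ.le), (Nat.lt_floor_add_one _).le⟩

section Packing

variable {E ι : Type*} [NormedAddCommGroup E] [NormedSpace ℝ E] [FiniteDimensional ℝ E]
  (s : Finset ι) (y : ι → E) (c : E)

theorem card_mul_pow_le_of_separated_of_mem_annulus {r a b : ℝ} (hr : 0 < r) (hra : r ≤ a)
    (hab : a ≤ b) (hsep : ∀ i ∈ s, ∀ j ∈ s, i ≠ j → 2 * r ≤ dist (y i) (y j))
    (hlo : ∀ j ∈ s, a ≤ dist c (y j)) (hhi : ∀ j ∈ s, dist c (y j) ≤ b) :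
    #s * r ^ finrank ℝ E ≤ (b + r) ^ finrank ℝ E - (a - r) ^ finrank ℝ E := by
  borelize E
  set μ : Measure E := Measure.addHaar
  set v := μ.real (ball 0 1)
  have hv : 0 < v :=
    ENNReal.toReal_pos (measure_ball_pos μ 0 one_pos).ne' measure_ball_lt_top.ne
  have hsmall : ∀ j ∈ s, μ.real (ball (y j) r) = r ^ finrank ℝ E * v := fun j _ => by
    simp [v, measureReal_def, μ.addHaar_ball_of_pos (y j) hr, ENNReal.toReal_ofReal, hr.le]
  have hdisj : (s : Set ι).PairwiseDisjoint fun j => ball (y j) r := fun i hi j hj hij =>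
    ball_disjoint_ball (by linarith [hsep i hi j hj hij])
  have hinner : Disjoint (closedBall c (a - r)) (⋃ j ∈ s, ball (y j) r) := by
    refine Set.disjoint_iUnion₂_right.2 fun j hj => closedBall_disjoint_ball ?_
    linarith [hlo j hj]
  have hsub : closedBall c (a - r) ∪ ⋃ j ∈ s, ball (y j) r ⊆ closedBall c (b + r) := by
    refine Set.union_subset (closedBall_subset_closedBall (by linarith)) ?_
    refine Set.iUnion₂_subset fun j hj z hz => ?_
    rw [mem_closedBall]
    linarith [dist_triangle z (y j) c, mem_ball.1 hz, dist_comm c (y j), hhi j hj]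
  have hballs : μ (⋃ j ∈ s, ball (y j) r) ≠ ⊤ :=
    (measure_mono (Set.subset_union_right.trans hsub)).trans_lt measure_closedBall_lt_top |>.ne
  have hvol := measureReal_mono (μ := μ) hsub measure_closedBall_lt_top.ne
  rw [measureReal_union hinner (s.measurableSet_biUnion fun _ _ => measurableSet_ball)
      measure_closedBall_lt_top.ne hballs,
    measureReal_biUnion_finset hdisj (fun _ _ => measurableSet_ball), sum_congr rfl hsmall,
    μ.addHaar_real_closedBall c (by linarith), μ.addHaar_real_closedBall c (by linarith),
    sum_const, nsmul_eq_mul] at hvol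
  refine le_of_mul_le_mul_right ?_ hv
  linarith

theorem card_le_of_separated_of_mem_shell {δ t : ℝ} (hδ : 0 < δ) (ht : 1 ≤ t)
    (hsep : ∀ i ∈ s, ∀ j ∈ s, i ≠ j → δ ≤ dist (y i) (y j))
    (hlo : ∀ j ∈ s, t * δ ≤ dist c (y j)) (hhi : ∀ j ∈ s, dist c (y j) ≤ (t + 1) * δ) :
    (#s : ℝ) ≤ 10 ^ finrank ℝ E * t ^ (finrank ℝ E - 1) := by
  have hpack := card_mul_pow_le_of_separated_of_mem_annulus s y c (half_pos hδ)
    (by nlinarith) (by nlinarith) (fun i hi j hj hij => by linarith [hsep i hi j hj hij]) hlo hhi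
  rw [show (t + 1) * δ + δ / 2 = (2 * t + 3) * (δ / 2) by ring,
    show t * δ - δ / 2 = (2 * t - 1) * (δ / 2) by ring, mul_pow, mul_pow, ← sub_mul] at hpack
  exact (le_of_mul_le_mul_right hpack (by positivity)).trans
    (two_mul_add_three_pow_sub_le ht _)

theorem sum_le_of_separated_of_mem_shell {g : ℝ → ℝ} (hg_nonneg : ∀ t, 0 ≤ g t)
    (hg_mono : AntitoneOn g (Set.Ici 0)) {δ t : ℝ} (hδ : 0 < δ) (ht : 1 ≤ t)
    (hsep : ∀ i ∈ s, ∀ j ∈ s, i ≠ j → δ ≤ dist (y i) (y j))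
    (hlo : ∀ j ∈ s, t * δ ≤ dist c (y j)) (hhi : ∀ j ∈ s, dist c (y j) ≤ (t + 1) * δ) :
    ∑ j ∈ s, g (dist c (y j)) ≤ 10 ^ finrank ℝ E * (t ^ (finrank ℝ E - 1) * g (t * δ)) := by
  have htδ : 0 ≤ t * δ := by positivity
  calc ∑ j ∈ s, g (dist c (y j)) ≤ ∑ j ∈ s, g (t * δ) :=
        sum_le_sum fun j hj => hg_mono htδ (htδ.trans (hlo j hj)) (hlo j hj)
    _ = #s * g (t * δ) := by rw [sum_const, nsmul_eq_mul]
    _ ≤ 10 ^ finrank ℝ E * (t ^ (finrank ℝ E - 1) * g (t * δ)) := by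
        rw [← mul_assoc]
        exact mul_le_mul_of_nonneg_right
          (card_le_of_separated_of_mem_shell s y c hδ ht hsep hlo hhi) (hg_nonneg _)

theorem sum_le_tsum_of_separated {g : ℝ → ℝ} (hg_nonneg : ∀ t, 0 ≤ g t)
    (hg_mono : AntitoneOn g (Set.Ici 0)) {δ : ℝ} (hδ : 0 < δ)
    (hg_sum : Summable fun m : ℕ =>
      ((m : ℝ) + 1) ^ (finrank ℝ E - 1) * g (((m : ℝ) + 1) * δ))
    (hsep : ∀ i ∈ s, ∀ j ∈ s, i ≠ j → δ ≤ dist (y i) (y j))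
    (hfar : ∀ j ∈ s, δ ≤ dist c (y j)) :
    ∑ j ∈ s, g (dist c (y j)) ≤
      10 ^ finrank ℝ E * ∑' m : ℕ, ((m : ℝ) + 1) ^ (finrank ℝ E - 1) * g (((m : ℝ) + 1) * δ) := by
  classical
  set shell : ι → ℕ := fun j => ⌊dist c (y j) / δ⌋₊ - 1
  have hshell : ∀ m : ℕ, ∀ j ∈ {j ∈ s | shell j = m},
      ((m : ℝ) + 1) * δ ≤ dist c (y j) ∧ dist c (y j) ≤ ((m : ℝ) + 1 + 1) * δ := by
    intro m j hj
    obtain ⟨hjs, rfl⟩ := mem_filter.1 hj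
    exact floor_div_sub_one_mem_shell hδ (hfar j hjs)
  rw [← sum_fiberwise_of_maps_to fun j hj => mem_image_of_mem shell hj]
  calc ∑ m ∈ s.image shell, ∑ j ∈ s with shell j = m, g (dist c (y j))
      ≤ ∑ m ∈ s.image shell,
          10 ^ finrank ℝ E * (((m : ℝ) + 1) ^ (finrank ℝ E - 1) * g (((m : ℝ) + 1) * δ)) :=
        sum_le_sum fun m _ => sum_le_of_separated_of_mem_shell _ y c hg_nonneg hg_mono hδ
          (by linarith [m.cast_nonneg (α := ℝ)])
          (fun i hi j hj => hsep i (mem_filter.1 hi).1 j (mem_filter.1 hj).1)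
          (fun j hj => (hshell m j hj).1) (fun j hj => (hshell m j hj).2)
    _ = 10 ^ finrank ℝ E * ∑ m ∈ s.image shell,
          ((m : ℝ) + 1) ^ (finrank ℝ E - 1) * g (((m : ℝ) + 1) * δ) := (mul_sum ..).symm
    _ ≤ _ := by
        gcongr
        exact hg_sum.sum_le_tsum _ fun m _ => mul_nonneg (by positivity) (hg_nonneg _)

end Packing

namespace Matrix.IsHermitian

variable {𝕜 n : Type*} [RCLike 𝕜] [Fintype n] [DecidableEq n] {A : Matrix n n 𝕜}

theorem exists_norm_eigenvalues_sub_le (hA : A.IsHermitian) (i : n) :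
    ∃ k, ‖(hA.eigenvalues i : 𝕜) - A k k‖ ≤ ∑ j ∈ univ.erase k, ‖A k j‖ := by
  have hspec : (hA.eigenvalues i : 𝕜) ∈ spectrum 𝕜 (toLin' A) := by
    rw [spectrum_toLin']
    exact spectrum.algebraMap_mem 𝕜 (hA.eigenvalues_mem_spectrum_real i)
  obtain ⟨k, hk⟩ := eigenvalue_mem_ball (Module.End.hasEigenvalue_iff_mem_spectrum.2 hspec)
  exact ⟨k, mem_closedBall_iff_norm.1 hk⟩

theorem le_eigenvalues_of_forall_le_re_diag_sub (hA : A.IsHermitian) {c : ℝ}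
    (h : ∀ k, c ≤ RCLike.re (A k k) - ∑ j ∈ univ.erase k, ‖A k j‖) (i : n) :
    c ≤ hA.eigenvalues i := by
  obtain ⟨k, hk⟩ := hA.exists_norm_eigenvalues_sub_le i
  have hre : RCLike.re (A k k) - hA.eigenvalues i ≤ ‖(hA.eigenvalues i : 𝕜) - A k k‖ := by
    simpa [norm_sub_rev] using RCLike.re_le_norm (A k k - hA.eigenvalues i)
  linarith [h k]

end Matrix.IsHermitian

theorem eigenvalue_lower_bound_of_separated_general
    (d : ℕ) (δ : ℝ) (hδ : 0 < δ)
    (g : ℝ → ℝ) (hg_nonneg : ∀ t, 0 ≤ g t) (hg_mono : AntitoneOn g (Set.Ici 0))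
    (hg_sum : Summable fun m : ℕ => ((m : ℝ) + 1) ^ (d - 1) * g (((m : ℝ) + 1) * δ))
    (N : ℕ) (x : Fin N → EuclideanSpace ℝ (Fin d))
    (hsep : ∀ i j, i ≠ j → δ ≤ ‖x i - x j‖)
    (Φ : Matrix (Fin N) (Fin N) ℝ)
    (hΦdef : Φ = Matrix.of fun i j => g ‖x i - x j‖)
    (hΦ : Φ.IsHermitian) :
    (∀ i, g 0 - 10 ^ d * (∑' m : ℕ, ((m : ℝ) + 1) ^ (d - 1) * g (((m : ℝ) + 1) * δ)) ≤
        hΦ.eigenvalues i) ∧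
      (10 ^ d * (∑' m : ℕ, ((m : ℝ) + 1) ^ (d - 1) * g (((m : ℝ) + 1) * δ)) < g 0 →
        Φ.PosDef) := by
  have hrow : ∀ k, g 0 - 10 ^ d * (∑' m : ℕ, ((m : ℝ) + 1) ^ (d - 1) * g (((m : ℝ) + 1) * δ)) ≤
      Φ k k - ∑ j ∈ univ.erase k, ‖Φ k j‖ := by
    intro k
    have hsum := sum_le_tsum_of_separated (univ.erase k) x (x k) hg_nonneg hg_mono hδ
      (by rwa [finrank_euclideanSpace_fin])
      (fun i _ j _ hij => by simpa [dist_eq_norm] using hsep i j hij)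
      (fun j hj => by simpa [dist_eq_norm] using hsep k j (ne_of_mem_erase hj).symm)
    simp only [finrank_euclideanSpace_fin, dist_eq_norm] at hsum
    simp only [hΦdef, Matrix.of_apply, sub_self, norm_zero]
    rw [sum_congr rfl fun j _ => Real.norm_of_nonneg (hg_nonneg _)]
    linarith
  have heig := hΦ.le_eigenvalues_of_forall_le_re_diag_sub fun k => by
    simpa only [RCLike.re_to_real] using hrow k
  exact ⟨heig, fun hlt => hΦ.posDef_iff_eigenvalues_pos.2 fun i => by linarith [heig i]⟩

/-- For a nonincreasing `g : [0,∞) → [0,∞)` and a `δ`-separated family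
`x₁, …, x_N` in `ℝ^d`, every eigenvalue of the matrix `Φ_{ij} = g(‖x_i − x_j‖)` is at least
`g(0) − 10^d ∑_{m≥1} m^{d−1} g(mδ)`.  In particular, if `10^d ∑_{m≥1} m^{d−1} g(mδ) < g(0)`
then `Φ` is positive definite, with smallest eigenvalue bounded below independently of `N`. -/
theorem eigenvalue_lower_bound_of_separated
    (d : ℕ) (hd : 1 ≤ d) (δ : ℝ) (hδ : 0 < δ)
    (g : ℝ → ℝ) (hg_nonneg : ∀ t, 0 ≤ g t) (hg_mono : AntitoneOn g (Set.Ici 0))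
    (hg_sum : Summable fun m : ℕ => ((m : ℝ) + 1) ^ (d - 1) * g (((m : ℝ) + 1) * δ))
    (N : ℕ) (x : Fin N → EuclideanSpace ℝ (Fin d))
    (hsep : ∀ i j, i ≠ j → δ ≤ ‖x i - x j‖)
    (Φ : Matrix (Fin N) (Fin N) ℝ)
    (hΦdef : Φ = Matrix.of fun i j => g ‖x i - x j‖)
    (hΦ : Φ.IsHermitian) :
    (∀ i, g 0 - 10 ^ d * (∑' m : ℕ, ((m : ℝ) + 1) ^ (d - 1) * g (((m : ℝ) + 1) * δ)) ≤
        hΦ.eigenvalues i) ∧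
      (10 ^ d * (∑' m : ℕ, ((m : ℝ) + 1) ^ (d - 1) * g (((m : ℝ) + 1) * δ)) < g 0 →
        Φ.PosDef) :=
  eigenvalue_lower_bound_of_separated_general d δ hδ g hg_nonneg hg_mono hg_sum N x hsep Φ hΦdef hΦ
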